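/- arXiv:1809.00533 — 3 statements merged into one kernel-verified Lean document; each statement's English description precedes it below -/
import Mathlib

section
/- Legendre's relation holds: η₁ω₂ − η₂ω₁ = 2πi, where η_k are the basic quasiperiods associated to the basic periods ω₁, ω₂ of a lattice with Im(ω₂/ω₁) > 0. -/
open Complex

noncomputable section

/-- The lattice point `m·ω₁ + n·ω₂`. -/
def latticePt (ω₁ ω₂ : ℂ) (p : ℤ × ℤ) : ℂ := p.1 * ω₁ + p.2 * ω₂

/-- The lattice `ℤω₁ + ℤω₂` as a subset of `ℂ`. -/
def lattice (ω₁ ω₂ : ℂ) : Set ℂ := Set.range (latticePt ω₁ ω₂)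

/-- The Weierstrass zeta function of the lattice `ℤω₁ + ℤω₂`. -/
def zetaW (ω₁ ω₂ : ℂ) (z : ℂ) : ℂ :=
  1 / z + ∑' p : {q : ℤ × ℤ // q ≠ 0},
    (1 / (z - latticePt ω₁ ω₂ p.1) + 1 / latticePt ω₁ ω₂ p.1 + z / latticePt ω₁ ω₂ p.1 ^ 2)

/-!
Integrate `ζ` over the boundary of the period parallelogram centred at `0`, with vertices
`±ω₁/2 ± ω₂/2`. Opposite edges differ by a period, so quasi-periodicity turns the integral into
`η₁ω₂ − η₂ω₁`. On the other hand `ζ z = 1/z + ∑_{w ≠ 0} (1/(z - w) + 1/w + z/w²)`. The term `1/z`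
contributes `2πi`, a sum of four explicit logarithms. Each summand has the primitive
`log (1 - z/w) + z/w + z²/(2w²)` on the parallelogram, because `z/w` is never a real number `≥ 1`
there, and the series is dominated by `∑ ‖w‖⁻³`, so it contributes `0`.
-/

open Set MeasureTheory intervalIntegral

section Segment

variable {f F : ℂ → ℂ} {p d : ℂ}

lemma add_mul_mem_segment {t : ℝ} (ht : t ∈ Icc (0 : ℝ) 1) : p + t * d ∈ segment ℝ p (p + d) :=
  (segment_eq_image' ℝ p (p + d)).symm ▸ ⟨t, ht, by simp [Complex.real_smul]⟩

lemma ContinuousOn.comp_segment (hf : ContinuousOn f (segment ℝ p (p + d))) :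
    ContinuousOn (fun t : ℝ => f (p + t * d)) (uIcc 0 1) :=
  hf.comp (by fun_prop) fun t ht => add_mul_mem_segment (by simpa using ht)

lemma integral_segment_eq_sub (hF : ∀ z ∈ segment ℝ p (p + d), HasDerivAt F (f z) z)
    (hf : ContinuousOn f (segment ℝ p (p + d))) :
    ∫ t in (0 : ℝ)..1, f (p + t * d) * d = F (p + d) - F p := by
  have hline (t : ℝ) : HasDerivAt (fun s : ℝ => p + s * d) d t := by
    simpa using ((hasDerivAt_id t).ofReal_comp.mul_const d).const_add p
  rw [integral_eq_sub_of_hasDerivAt (f := fun t : ℝ => F (p + t * d))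
    (fun t ht => (hF _ (add_mul_mem_segment (by simpa using ht))).comp t (hline t))
    ((hf.comp_segment.mul continuousOn_const).intervalIntegrable)]
  simp

lemma div_mem_slitPlane_of_mem_segment (him : ((p + d) / p).im ≠ 0) {z : ℂ}
    (hz : z ∈ segment ℝ p (p + d)) : z / p ∈ slitPlane := by
  have hp : p ≠ 0 := by rintro rfl; simp at him
  obtain ⟨t, ⟨ht₀, -⟩, rfl⟩ := (segment_eq_image' ℝ p (p + d)) ▸ hz
  rcases ht₀.eq_or_lt with rfl | ht₀
  · simp [hp, one_mem_slitPlane]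
  · refine Or.inr ?_
    have : (p + t • (p + d - p)) / p = 1 + t * ((p + d) / p - 1) := by
      rw [Complex.real_smul]; field_simp
    rw [this]
    simpa using mul_ne_zero ht₀.ne' him

lemma continuousOn_one_div_segment (him : ((p + d) / p).im ≠ 0) :
    ContinuousOn (fun z : ℂ => 1 / z) (segment ℝ p (p + d)) :=
  continuousOn_const.div continuousOn_id fun _ hz =>
    left_ne_zero_of_mul (slitPlane_ne_zero (div_mem_slitPlane_of_mem_segment him hz))

lemma intervalIntegrable_one_div_segment (him : ((p + d) / p).im ≠ 0) :
    IntervalIntegrable (fun t : ℝ => 1 / (p + t * d) * d) volume 0 1 :=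
  ((continuousOn_one_div_segment him).comp_segment.mul continuousOn_const).intervalIntegrable

lemma integral_one_div_segment (him : ((p + d) / p).im ≠ 0) :
    ∫ t in (0 : ℝ)..1, 1 / (p + t * d) * d = log ((p + d) / p) := by
  have hp : p ≠ 0 := by rintro rfl; simp at him
  rw [integral_segment_eq_sub (F := fun z => log (z / p)) _ (continuousOn_one_div_segment him),
    div_self hp, log_one, sub_zero]
  intro z hz
  have hzp := div_mem_slitPlane_of_mem_segment him hz
  convert ((hasDerivAt_id' z).div_const p).clog hzp using 1
  field_simp [slitPlane_ne_zero hzp]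

end Segment

/-- For `0 < (v / u).im`, `∫ t in 0..1, parallelogramIntegrand f A u v t` is the integral of `f`
over the positively oriented boundary of the parallelogram with vertices `A`, `A + u`,
`A + u + v`, `A + v`. -/
def parallelogramIntegrand (f : ℂ → ℂ) (A u v : ℂ) (t : ℝ) : ℂ :=
  f (A + u + t * v) * v - f (A + t * v) * v - f (A + v + t * u) * u + f (A + t * u) * u

def parallelogramBoundary (A u v : ℂ) : Set ℂ :=
  segment ℝ (A + u) (A + u + v) ∪ segment ℝ A (A + v) ∪ segment ℝ (A + v) (A + v + u) ∪
    segment ℝ A (A + u)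

section Parallelogram

variable {f F : ℂ → ℂ} {A u v : ℂ}

lemma parallelogramIntegrand_eq_of_sub_eq {η₁ η₂ : ℂ} {t : ℝ}
    (h₁ : f (A + t * v + u) - f (A + t * v) = η₁) (h₂ : f (A + t * u + v) - f (A + t * u) = η₂) :
    parallelogramIntegrand f A u v t = η₁ * v - η₂ * u := by
  rw [add_right_comm] at h₁ h₂
  unfold parallelogramIntegrand
  linear_combination v * h₁ - u * h₂

lemma integral_parallelogramIntegrand
    (h₁ : IntervalIntegrable (fun t : ℝ => f (A + u + t * v) * v) volume 0 1)
    (h₂ : IntervalIntegrable (fun t : ℝ => f (A + t * v) * v) volume 0 1)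
    (h₃ : IntervalIntegrable (fun t : ℝ => f (A + v + t * u) * u) volume 0 1)
    (h₄ : IntervalIntegrable (fun t : ℝ => f (A + t * u) * u) volume 0 1) :
    ∫ t in (0 : ℝ)..1, parallelogramIntegrand f A u v t =
      (∫ t in (0 : ℝ)..1, f (A + u + t * v) * v) - (∫ t in (0 : ℝ)..1, f (A + t * v) * v) -
        (∫ t in (0 : ℝ)..1, f (A + v + t * u) * u) + ∫ t in (0 : ℝ)..1, f (A + t * u) * u := by
  unfold parallelogramIntegrand
  rw [integral_add ((h₁.sub h₂).sub h₃) h₄, integral_sub (h₁.sub h₂) h₃, integral_sub h₁ h₂]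

lemma continuousOn_parallelogramIntegrand (hf : ContinuousOn f (parallelogramBoundary A u v)) :
    ContinuousOn (parallelogramIntegrand f A u v) (uIcc 0 1) := by
  unfold parallelogramBoundary at hf
  exact ((((hf.mono (by grind)).comp_segment.mul continuousOn_const).sub
    ((hf.mono (by grind)).comp_segment.mul continuousOn_const)).sub
    ((hf.mono (by grind)).comp_segment.mul continuousOn_const)).add
    ((hf.mono (by grind)).comp_segment.mul continuousOn_const)

lemma integral_parallelogramIntegrand_eq_zero
    (hF : ∀ z ∈ parallelogramBoundary A u v, HasDerivAt F (f z) z)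
    (hf : ContinuousOn f (parallelogramBoundary A u v)) :
    ∫ t in (0 : ℝ)..1, parallelogramIntegrand f A u v t = 0 := by
  have hedge {p d : ℂ} (hs : segment ℝ p (p + d) ⊆ parallelogramBoundary A u v) :
      IntervalIntegrable (fun t : ℝ => f (p + t * d) * d) volume 0 1 ∧
        ∫ t in (0 : ℝ)..1, f (p + t * d) * d = F (p + d) - F p :=
    ⟨((hf.mono hs).comp_segment.mul continuousOn_const).intervalIntegrable,
      integral_segment_eq_sub (fun z hz => hF z (hs hz)) (hf.mono hs)⟩
  obtain ⟨h₁, e₁⟩ := hedge (p := A + u) (d := v) (by unfold parallelogramBoundary; grind)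
  obtain ⟨h₂, e₂⟩ := hedge (p := A) (d := v) (by unfold parallelogramBoundary; grind)
  obtain ⟨h₃, e₃⟩ := hedge (p := A + v) (d := u) (by unfold parallelogramBoundary; grind)
  obtain ⟨h₄, e₄⟩ := hedge (p := A) (d := u) (by unfold parallelogramBoundary; grind)
  rw [integral_parallelogramIntegrand h₁ h₂ h₃ h₄, e₁, e₂, e₃, e₄, add_right_comm A v u]
  ring

lemma mem_parallelogramBoundary {t : ℝ} (ht : t ∈ Icc (0 : ℝ) 1) :
    A + u + t * v ∈ parallelogramBoundary A u v ∧ A + t * v ∈ parallelogramBoundary A u v ∧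
      A + v + t * u ∈ parallelogramBoundary A u v ∧ A + t * u ∈ parallelogramBoundary A u v := by
  have := add_mul_mem_segment (p := A + u) (d := v) ht
  have := add_mul_mem_segment (p := A) (d := v) ht
  have := add_mul_mem_segment (p := A + v) (d := u) ht
  have := add_mul_mem_segment (p := A) (d := u) ht
  unfold parallelogramBoundary
  grind

lemma norm_parallelogramIntegrand_le {K : ℝ} (hf : ∀ z ∈ parallelogramBoundary A u v, ‖f z‖ ≤ K)
    {t : ℝ} (ht : t ∈ Icc (0 : ℝ) 1) :
    ‖parallelogramIntegrand f A u v t‖ ≤ 2 * K * (‖u‖ + ‖v‖) := by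
  obtain ⟨h₁, h₂, h₃, h₄⟩ := mem_parallelogramBoundary (A := A) (u := u) (v := v) ht
  unfold parallelogramIntegrand
  calc _ ≤ ‖f (A + u + t * v)‖ * ‖v‖ + ‖f (A + t * v)‖ * ‖v‖ + ‖f (A + v + t * u)‖ * ‖u‖ +
        ‖f (A + t * u)‖ * ‖u‖ := by
        simp only [← norm_mul]
        exact (norm_add_le _ _).trans
          (by gcongr; exact (norm_sub_le _ _).trans (by gcongr; exact norm_sub_le _ _))
    _ ≤ K * ‖v‖ + K * ‖v‖ + K * ‖u‖ + K * ‖u‖ := by gcongr <;> exact hf _ ‹_›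
    _ = 2 * K * (‖u‖ + ‖v‖) := by ring

lemma hasSum_parallelogramIntegrand {ι : Type*} {g : ι → ℂ → ℂ}
    (hg : ∀ z ∈ parallelogramBoundary A u v, HasSum (fun i => g i z) (f z))
    {t : ℝ} (ht : t ∈ Icc (0 : ℝ) 1) :
    HasSum (fun i => parallelogramIntegrand (g i) A u v t) (parallelogramIntegrand f A u v t) := by
  obtain ⟨h₁, h₂, h₃, h₄⟩ := mem_parallelogramBoundary (A := A) (u := u) (v := v) ht
  exact ((((hg _ h₁).mul_right v).sub ((hg _ h₂).mul_right v)).sub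
    ((hg _ h₃).mul_right u)).add ((hg _ h₄).mul_right u)

end Parallelogram

lemma hasSum_intervalIntegral_of_norm_le {ι E : Type*} [Countable ι] [NormedAddCommGroup E]
    [NormedSpace ℝ E] {F : ι → ℝ → E} {f : ℝ → E} {K : ι → ℝ} {a b : ℝ}
    (hF : ∀ i, ContinuousOn (F i) (uIcc a b)) (hK : Summable K)
    (hFK : ∀ i, ∀ t ∈ uIcc a b, ‖F i t‖ ≤ K i)
    (hf : ∀ t ∈ uIcc a b, HasSum (fun i => F i t) (f t)) :
    HasSum (fun i => ∫ t in a..b, F i t) (∫ t in a..b, f t) :=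
  hasSum_integral_of_dominated_convergence (fun i _ => K i)
    (fun i => ((hF i).mono uIoc_subset_uIcc).aestronglyMeasurable measurableSet_uIoc)
    (fun i => ae_of_all _ fun t ht => hFK i t (uIoc_subset_uIcc ht))
    (ae_of_all _ fun _ _ => hK) intervalIntegrable_const
    (ae_of_all _ fun t ht => hf t (uIoc_subset_uIcc ht))

lemma integral_parallelogramIntegrand_tsum_eq_zero {ι : Type*} [Countable ι] {A u v : ℂ}
    {g G : ι → ℂ → ℂ} {K : ι → ℝ}
    (hG : ∀ i, ∀ z ∈ parallelogramBoundary A u v, HasDerivAt (G i) (g i z) z)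
    (hg : ∀ i, ContinuousOn (g i) (parallelogramBoundary A u v)) (hK : Summable K)
    (hgK : ∀ i, ∀ z ∈ parallelogramBoundary A u v, ‖g i z‖ ≤ K i) :
    ∫ t in (0 : ℝ)..1, parallelogramIntegrand (fun z => ∑' i, g i z) A u v t = 0 := by
  have hsum := hasSum_intervalIntegral_of_norm_le
    (fun i => continuousOn_parallelogramIntegrand (hg i))
    ((hK.mul_left 2).mul_right (‖u‖ + ‖v‖))
    (fun i t ht => norm_parallelogramIntegrand_le (hgK i) (by simpa using ht))
    (fun t ht => hasSum_parallelogramIntegrand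
      (fun z hz => (Summable.of_norm_bounded hK fun i => hgK i z hz).hasSum) (by simpa using ht))
  simp only [integral_parallelogramIntegrand_eq_zero (hG _) (hg _)] at hsum
  exact hsum.unique hasSum_zero

lemma Complex.log_neg_of_im_pos {x : ℂ} (hx : 0 < x.im) : log (-x) = log x - Real.pi * I := by
  apply Complex.ext <;> simp [log_re, log_im, arg_neg_eq_arg_sub_pi_of_im_pos hx]

lemma im_add_div_sub_pos {u v : ℂ} (h : 0 < (v / u).im) : 0 < ((u + v) / (u - v)).im := by
  have hu : u ≠ 0 := by rintro rfl; simp at h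
  set τ := v / u
  have hτ : 1 - τ ≠ 0 := fun h0 => by
    have := congrArg im h0; simp at this; linarith
  have : (u + v) / (u - v) = (1 + τ) / (1 - τ) := by
    simp only [τ]; field_simp
  rw [this, div_im]
  have : 0 < normSq (1 - τ) := normSq_pos.mpr hτ
  simp only [add_im, sub_im, add_re, sub_re, one_re, one_im]
  rw [← sub_div]
  apply div_pos _ this
  nlinarith

lemma div_edges_centered_parallelogram (u v : ℂ) :
    (-(u + v) / 2 + u + v) / (-(u + v) / 2 + u) = (u + v) / (u - v) ∧
      (-(u + v) / 2 + v) / (-(u + v) / 2) = ((u + v) / (u - v))⁻¹ ∧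
      (-(u + v) / 2 + v + u) / (-(u + v) / 2 + v) = -((u + v) / (u - v)) ∧
      (-(u + v) / 2 + u) / (-(u + v) / 2) = -((u + v) / (u - v))⁻¹ := by
  have hu : -(u + v) / 2 + u = (u - v) / 2 := by ring
  have hv : -(u + v) / 2 + v = -(u - v) / 2 := by ring
  refine ⟨?_, ?_, ?_, ?_⟩
  · rw [show -(u + v) / 2 + u + v = (u + v) / 2 by ring, hu,
      div_div_div_cancel_right₀ two_ne_zero]
  · rw [hv, div_div_div_cancel_right₀ two_ne_zero, neg_div_neg_eq, inv_div]
  · rw [show -(u + v) / 2 + v + u = (u + v) / 2 by ring, hv,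
      div_div_div_cancel_right₀ two_ne_zero, div_neg]
  · rw [hu, div_div_div_cancel_right₀ two_ne_zero, div_neg, inv_div]

lemma Complex.im_inv_ne_zero {x : ℂ} (hx : x.im ≠ 0) : x⁻¹.im ≠ 0 := by
  have : x ≠ 0 := by rintro rfl; simp at hx
  simp [hx, this]

lemma intervalIntegrable_parallelogramIntegrand_one_div {u v : ℂ} (h : 0 < (v / u).im) :
    IntervalIntegrable (parallelogramIntegrand (fun z => 1 / z) (-(u + v) / 2) u v) volume 0 1 := by
  have hr := (im_add_div_sub_pos h).ne'
  obtain ⟨e₁, e₂, e₃, e₄⟩ := div_edges_centered_parallelogram u v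
  exact (((intervalIntegrable_one_div_segment (e₁ ▸ hr)).sub
    (intervalIntegrable_one_div_segment (e₂ ▸ Complex.im_inv_ne_zero hr))).sub
    (intervalIntegrable_one_div_segment (e₃ ▸ by simpa using hr))).add
    (intervalIntegrable_one_div_segment (e₄ ▸ by simpa using Complex.im_inv_ne_zero hr))

lemma integral_parallelogramIntegrand_one_div {u v : ℂ} (h : 0 < (v / u).im) :
    ∫ t in (0 : ℝ)..1, parallelogramIntegrand (fun z => 1 / z) (-(u + v) / 2) u v t =
      2 * Real.pi * I := by
  set r := (u + v) / (u - v)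
  have hr : 0 < r.im := im_add_div_sub_pos h
  have hr₁ : (r⁻¹).im ≠ 0 := Complex.im_inv_ne_zero hr.ne'
  have hr₂ : (-r).im ≠ 0 := by simpa using hr.ne'
  have hr₃ : (-r⁻¹).im ≠ 0 := by simpa using hr₁
  have harg {x : ℂ} (hx : x.im ≠ 0) : x.arg ≠ Real.pi := fun h => hx (arg_eq_pi_iff.mp h).2
  obtain ⟨e₁, e₂, e₃, e₄⟩ := div_edges_centered_parallelogram u v
  rw [integral_parallelogramIntegrand (intervalIntegrable_one_div_segment (e₁ ▸ hr.ne'))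
    (intervalIntegrable_one_div_segment (e₂ ▸ hr₁))
    (intervalIntegrable_one_div_segment (e₃ ▸ hr₂))
    (intervalIntegrable_one_div_segment (e₄ ▸ hr₃)),
    integral_one_div_segment (e₁ ▸ hr.ne'), integral_one_div_segment (e₂ ▸ hr₁),
    integral_one_div_segment (e₃ ▸ hr₂), integral_one_div_segment (e₄ ▸ hr₃), e₁, e₂, e₃, e₄,
    neg_inv, log_inv _ (harg hr₂), log_inv _ (harg hr.ne'), log_neg_of_im_pos hr]
  ring

section ZetaSummand

def zetaSummand (w z : ℂ) : ℂ := 1 / (z - w) + 1 / w + z / w ^ 2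

def zetaSummandPrimitive (w z : ℂ) : ℂ := log (1 - z / w) + z / w + z ^ 2 / (2 * w ^ 2)

variable {w z : ℂ}

lemma sub_ne_zero_of_one_sub_div_mem_slitPlane (hw : w ≠ 0) (hz : 1 - z / w ∈ slitPlane) :
    z - w ≠ 0 := by
  rintro h
  rw [sub_eq_zero.mp h, div_self hw, sub_self] at hz
  exact slitPlane_ne_zero hz rfl

lemma hasDerivAt_zetaSummandPrimitive (hw : w ≠ 0) (hz : 1 - z / w ∈ slitPlane) :
    HasDerivAt (zetaSummandPrimitive w) (zetaSummand w z) z := by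
  have hzw := sub_ne_zero_of_one_sub_div_mem_slitPlane hw hz
  have : w - z ≠ 0 := fun h => hzw (by linear_combination -h)
  refine (((((hasDerivAt_id' z).div_const w).const_sub 1).clog hz).add
    ((hasDerivAt_id' z).div_const w)).add ((hasDerivAt_pow 2 z).div_const (2 * w ^ 2))
    |>.congr_deriv ?_
  unfold zetaSummand
  field_simp
  ring

lemma continuousAt_zetaSummand (hzw : z - w ≠ 0) : ContinuousAt (zetaSummand w) z := by
  unfold zetaSummand
  fun_prop (disch := assumption)

lemma norm_zetaSummand_le {r R : ℝ} (hr : 0 < r) (hw : r ≤ ‖w‖) (hzw : r / 2 ≤ ‖z - w‖)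
    (hz : ‖z‖ ≤ R) : ‖zetaSummand w z‖ ≤ 2 * R ^ 2 / r ^ 3 := by
  have hw₀ : w ≠ 0 := norm_pos_iff.mp (hr.trans_le hw)
  have hzw₀ : z - w ≠ 0 := norm_pos_iff.mp ((half_pos hr).trans_le hzw)
  have : zetaSummand w z = z ^ 2 / (w ^ 2 * (z - w)) := by
    unfold zetaSummand; field_simp; ring
  rw [this, norm_div, norm_mul, norm_pow, norm_pow, div_le_div_iff₀ (by positivity) (by positivity)]
  calc ‖z‖ ^ 2 * r ^ 3 = ‖z‖ ^ 2 * (2 * (r ^ 2 * (r / 2))) := by ring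
    _ ≤ R ^ 2 * (2 * (‖w‖ ^ 2 * ‖z - w‖)) := by gcongr
    _ = 2 * R ^ 2 * (‖w‖ ^ 2 * ‖z - w‖) := by ring

end ZetaSummand

lemma one_sub_div_mem_slitPlane_of_norm_lt {E : Type*} [NormedAddCommGroup E] [NormedSpace ℝ E]
    {f : E →ₗ[ℝ] ℂ} (hf : Function.Injective f) {x y : E} (hxy : ‖x‖ < ‖y‖) :
    1 - f x / f y ∈ slitPlane := by
  have hy : f y ≠ 0 := fun h => by
    rw [← map_zero f] at h; rw [hf h, norm_zero] at hxy; exact (norm_nonneg x).not_gt hxy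
  by_contra hmem
  rw [mem_slitPlane_iff, not_or, not_lt, not_ne_iff] at hmem
  set ρ := (f x / f y).re
  have hρ : f x / f y = ρ := Complex.ext rfl (by simpa using hmem.2)
  have hx : x = ρ • y := hf (by rw [map_smul, Complex.real_smul, ← hρ, div_mul_cancel₀ _ hy])
  have : 1 ≤ ρ := by simpa [ρ] using hmem.1
  rw [hx, norm_smul, Real.norm_of_nonneg (by linarith)] at hxy
  nlinarith [norm_nonneg y]

lemma norm_finTwoArrowEquiv_symm (q : ℤ × ℤ) : ‖(finTwoArrowEquiv ℤ).symm q‖ = ‖q‖ := by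
  simp [Prod.norm_def, EisensteinSeries.norm_eq_max_natAbs, Int.norm_eq_abs]

lemma summable_inv_norm_pow_three : Summable fun q : ℤ × ℤ => (‖q‖ ^ 3)⁻¹ := by
  refine ((finTwoArrowEquiv ℤ).symm.summable_iff.mpr
    (EisensteinSeries.summable_one_div_norm_rpow (k := 3) (by norm_num))).congr fun q => ?_
  simp only [Function.comp_apply, norm_finTwoArrowEquiv_symm]
  rw [Real.rpow_neg (norm_nonneg _)]
  norm_cast

lemma one_le_norm_of_ne_zero {q : ℤ × ℤ} (hq : q ≠ 0) : 1 ≤ ‖q‖ := by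
  rw [Prod.norm_def, Int.norm_eq_abs, Int.norm_eq_abs]
  rcases q with ⟨m, n⟩
  rcases eq_or_ne m 0 with rfl | hm
  · exact le_max_of_le_right (by exact_mod_cast Int.one_le_abs (by simpa using hq))
  · exact le_max_of_le_left (by exact_mod_cast Int.one_le_abs hm)

lemma norm_intCast_prod (q : ℤ × ℤ) : ‖((q.1 : ℝ), (q.2 : ℝ))‖ = ‖q‖ := by
  simp [Prod.norm_def, Int.norm_eq_abs]

def periodMap (ω₁ ω₂ : ℂ) : ℝ × ℝ →ₗ[ℝ] ℂ :=
  (LinearMap.fst ℝ ℝ ℝ).smulRight ω₁ + (LinearMap.snd ℝ ℝ ℝ).smulRight ω₂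

/-- `ℝ × ℝ` carries the sup norm, so this is the image of the square `[-1/2, 1/2]²`. -/
def periodParallelogram (ω₁ ω₂ : ℂ) : Set ℂ := periodMap ω₁ ω₂ '' Metric.closedBall 0 (1 / 2)

section Lattice

variable {ω₁ ω₂ : ℂ}

@[simp]
lemma periodMap_apply (x : ℝ × ℝ) : periodMap ω₁ ω₂ x = x.1 * ω₁ + x.2 * ω₂ := by
  simp [periodMap, Complex.real_smul]

lemma latticePt_eq_periodMap (q : ℤ × ℤ) :
    latticePt ω₁ ω₂ q = periodMap ω₁ ω₂ ((q.1 : ℝ), (q.2 : ℝ)) := by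
  simp [latticePt]

lemma periodMap_injective (h : (ω₂ / ω₁).im ≠ 0) : Function.Injective (periodMap ω₁ ω₂) := by
  have hω₁ : ω₁ ≠ 0 := by rintro rfl; simp at h
  refine (injective_iff_map_eq_zero _).mpr fun x hx => ?_
  have hx' : (x.1 + x.2 * (ω₂ / ω₁) : ℂ) = 0 := by
    rw [periodMap_apply] at hx; field_simp; linear_combination hx
  have h₂ : x.2 = 0 := by simpa [h] using congrArg im hx'
  have h₁ : x.1 = 0 := by simpa [h₂] using congrArg re hx'
  exact Prod.ext h₁ h₂

lemma exists_mul_norm_le_norm_periodMap (h : (ω₂ / ω₁).im ≠ 0) :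
    ∃ c > 0, ∀ x, c * ‖x‖ ≤ ‖periodMap ω₁ ω₂ x‖ :=
  antilipschitzWith_iff_exists_mul_le_norm.mp <| ((periodMap ω₁ ω₂).exists_antilipschitzWith
    (LinearMap.ker_eq_bot.mpr (periodMap_injective h))).imp fun _ h => h.2

lemma norm_periodMap_le (x : ℝ × ℝ) : ‖periodMap ω₁ ω₂ x‖ ≤ ‖x‖ * (‖ω₁‖ + ‖ω₂‖) := by
  rw [periodMap_apply]
  refine (norm_add_le _ _).trans ?_
  simp only [norm_mul, norm_real, Real.norm_eq_abs]
  rw [mul_add]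
  gcongr
  · exact norm_fst_le x
  · exact norm_snd_le x

lemma intCast_ne_neg_half (n : ℤ) : (n : ℝ) ≠ -(1 / 2) := by
  intro h
  have : 2 * n + 1 = 0 := by exact_mod_cast (show ((2 * n + 1 : ℤ) : ℝ) = 0 by push_cast; linarith)
  omega

lemma neg_half_add_mul_notMem_lattice (h : (ω₂ / ω₁).im ≠ 0) (t : ℝ) :
    -(ω₁ + ω₂) / 2 + t * ω₂ ∉ lattice ω₁ ω₂ ∧ -(ω₁ + ω₂) / 2 + t * ω₁ ∉ lattice ω₁ ω₂ := by
  have e₂ : -(ω₁ + ω₂) / 2 + t * ω₂ = periodMap ω₁ ω₂ (-(1 / 2), t - 1 / 2) := by simp; ring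
  have e₁ : -(ω₁ + ω₂) / 2 + t * ω₁ = periodMap ω₁ ω₂ (t - 1 / 2, -(1 / 2)) := by simp; ring
  rw [e₁, e₂]
  constructor <;> rintro ⟨q, hq⟩ <;> rw [latticePt_eq_periodMap] at hq <;>
    have := Prod.ext_iff.mp (periodMap_injective h hq)
  · exact intCast_ne_neg_half _ this.1
  · exact intCast_ne_neg_half _ this.2

lemma parallelogramBoundary_subset_periodParallelogram :
    parallelogramBoundary (-(ω₁ + ω₂) / 2) ω₁ ω₂ ⊆ periodParallelogram ω₁ ω₂ := by
  have hS := (convex_closedBall (0 : ℝ × ℝ) (1 / 2)).linear_image (periodMap ω₁ ω₂)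
  have hmem (a b : ℝ) (ha : |a| = 1 / 2) (hb : |b| = 1 / 2) :
      (a : ℂ) * ω₁ + b * ω₂ ∈ periodParallelogram ω₁ ω₂ :=
    ⟨(a, b), by simp [Prod.norm_def, ha, hb], by simp⟩
  have c₀ : -(ω₁ + ω₂) / 2 ∈ periodParallelogram ω₁ ω₂ := by
    convert hmem (-(1 / 2)) (-(1 / 2)) (by norm_num) (by norm_num) using 1; push_cast; ring
  have c₁ : -(ω₁ + ω₂) / 2 + ω₁ ∈ periodParallelogram ω₁ ω₂ := by
    convert hmem (1 / 2) (-(1 / 2)) (by norm_num) (by norm_num) using 1; push_cast; ring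
  have c₂ : -(ω₁ + ω₂) / 2 + ω₂ ∈ periodParallelogram ω₁ ω₂ := by
    convert hmem (-(1 / 2)) (1 / 2) (by norm_num) (by norm_num) using 1; push_cast; ring
  have c₃ : -(ω₁ + ω₂) / 2 + ω₁ + ω₂ ∈ periodParallelogram ω₁ ω₂ := by
    convert hmem (1 / 2) (1 / 2) (by norm_num) (by norm_num) using 1; push_cast; ring
  have c₄ : -(ω₁ + ω₂) / 2 + ω₂ + ω₁ ∈ periodParallelogram ω₁ ω₂ := by
    rwa [add_right_comm] at c₃
  exact union_subset (union_subset (union_subset (hS.segment_subset c₁ c₃)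
    (hS.segment_subset c₀ c₂)) (hS.segment_subset c₂ c₄)) (hS.segment_subset c₀ c₁)

lemma latticePt_ne_zero (h : (ω₂ / ω₁).im ≠ 0) {q : ℤ × ℤ} (hq : q ≠ 0) :
    latticePt ω₁ ω₂ q ≠ 0 := by
  rw [latticePt_eq_periodMap, ← map_zero (periodMap ω₁ ω₂)]
  exact (periodMap_injective h).ne (by simpa [Prod.ext_iff] using hq)

lemma one_sub_div_latticePt_mem_slitPlane (h : (ω₂ / ω₁).im ≠ 0) {x : ℝ × ℝ} (hx : ‖x‖ ≤ 1 / 2)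
    {q : ℤ × ℤ} (hq : q ≠ 0) : 1 - periodMap ω₁ ω₂ x / latticePt ω₁ ω₂ q ∈ slitPlane := by
  rw [latticePt_eq_periodMap]
  refine one_sub_div_mem_slitPlane_of_norm_lt (periodMap_injective h) ?_
  linarith [norm_intCast_prod q, one_le_norm_of_ne_zero hq]

lemma hasDerivAt_zetaSummandPrimitive_latticePt (h : (ω₂ / ω₁).im ≠ 0) {z : ℂ}
    (hz : z ∈ periodParallelogram ω₁ ω₂) {q : ℤ × ℤ} (hq : q ≠ 0) :
    HasDerivAt (zetaSummandPrimitive (latticePt ω₁ ω₂ q))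
      (zetaSummand (latticePt ω₁ ω₂ q) z) z := by
  obtain ⟨x, hx, rfl⟩ := hz
  exact hasDerivAt_zetaSummandPrimitive (latticePt_ne_zero h hq)
    (one_sub_div_latticePt_mem_slitPlane h (mem_closedBall_zero_iff.mp hx) hq)

lemma continuousOn_zetaSummand_latticePt (h : (ω₂ / ω₁).im ≠ 0) {q : ℤ × ℤ} (hq : q ≠ 0) :
    ContinuousOn (zetaSummand (latticePt ω₁ ω₂ q)) (periodParallelogram ω₁ ω₂) := by
  rintro _ ⟨x, hx, rfl⟩
  exact (continuousAt_zetaSummand (sub_ne_zero_of_one_sub_div_mem_slitPlane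
    (latticePt_ne_zero h hq) (one_sub_div_latticePt_mem_slitPlane h
      (mem_closedBall_zero_iff.mp hx) hq))).continuousWithinAt

lemma exists_norm_zetaSummand_latticePt_le (h : (ω₂ / ω₁).im ≠ 0) :
    ∃ M, ∀ z ∈ periodParallelogram ω₁ ω₂, ∀ q : ℤ × ℤ, q ≠ 0 →
      ‖zetaSummand (latticePt ω₁ ω₂ q) z‖ ≤ M * (‖q‖ ^ 3)⁻¹ := by
  obtain ⟨c, hc, hle⟩ := exists_mul_norm_le_norm_periodMap h
  refine ⟨2 * (‖ω₁‖ + ‖ω₂‖) ^ 2 / c ^ 3, ?_⟩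
  rintro _ ⟨x, hx, rfl⟩ q hq
  rw [mem_closedBall_zero_iff] at hx
  have hq₁ := one_le_norm_of_ne_zero hq
  have hw : c * ‖q‖ ≤ ‖latticePt ω₁ ω₂ q‖ := by
    rw [latticePt_eq_periodMap, ← norm_intCast_prod]; exact hle _
  have hzw : c * ‖q‖ / 2 ≤ ‖periodMap ω₁ ω₂ x - latticePt ω₁ ω₂ q‖ := by
    rw [latticePt_eq_periodMap, ← map_sub]
    refine le_trans ?_ (hle _)
    have := norm_sub_norm_le ((q.1 : ℝ), (q.2 : ℝ)) x
    rw [norm_intCast_prod, norm_sub_rev] at this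
    nlinarith
  have hz : ‖periodMap ω₁ ω₂ x‖ ≤ ‖ω₁‖ + ‖ω₂‖ :=
    (norm_periodMap_le x).trans (by nlinarith [norm_nonneg ω₁, norm_nonneg ω₂])
  calc _ ≤ 2 * (‖ω₁‖ + ‖ω₂‖) ^ 2 / (c * ‖q‖) ^ 3 := norm_zetaSummand_le (by positivity) hw hzw hz
    _ = 2 * (‖ω₁‖ + ‖ω₂‖) ^ 2 / c ^ 3 * (‖q‖ ^ 3)⁻¹ := by ring

end Lattice

/-- **Legendre's relation**: `η₁ω₂ − η₂ω₁ = 2πi` for the basic quasiperiods `η₁, η₂`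
of a lattice with `Im(ω₂/ω₁) > 0`. -/
theorem legendre_relation (ω₁ ω₂ : ℂ) (hτ : 0 < (ω₂ / ω₁).im)
    (η₁ η₂ : ℂ)
    (h1 : ∀ z ∉ lattice ω₁ ω₂, zetaW ω₁ ω₂ (z + ω₁) - zetaW ω₁ ω₂ z = η₁)
    (h2 : ∀ z ∉ lattice ω₁ ω₂, zetaW ω₁ ω₂ (z + ω₂) - zetaW ω₁ ω₂ z = η₂) :
    η₁ * ω₂ - η₂ * ω₁ = 2 * Real.pi * I := by
  set A := -(ω₁ + ω₂) / 2
  have hB := parallelogramBoundary_subset_periodParallelogram (ω₁ := ω₁) (ω₂ := ω₂)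
  obtain ⟨M, hM⟩ := exists_norm_zetaSummand_latticePt_le hτ.ne'
  have hquasi (t : ℝ) : parallelogramIntegrand (zetaW ω₁ ω₂) A ω₁ ω₂ t = η₁ * ω₂ - η₂ * ω₁ :=
    parallelogramIntegrand_eq_of_sub_eq (h1 _ (neg_half_add_mul_notMem_lattice hτ.ne' t).1)
      (h2 _ (neg_half_add_mul_notMem_lattice hτ.ne' t).2)
  have hseries : ∫ t in (0 : ℝ)..1, parallelogramIntegrand
      (fun z => ∑' q : {q : ℤ × ℤ // q ≠ 0}, zetaSummand (latticePt ω₁ ω₂ q) z) A ω₁ ω₂ t = 0 :=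
    integral_parallelogramIntegrand_tsum_eq_zero
      (fun q _ hz => hasDerivAt_zetaSummandPrimitive_latticePt hτ.ne' (hB hz) q.2)
      (fun q => (continuousOn_zetaSummand_latticePt hτ.ne' q.2).mono hB)
      ((summable_inv_norm_pow_three.subtype _).mul_left M) (fun q _ hz => hM _ (hB hz) q q.2)
  have hsplit (t : ℝ) : parallelogramIntegrand
      (fun z => ∑' q : {q : ℤ × ℤ // q ≠ 0}, zetaSummand (latticePt ω₁ ω₂ q) z) A ω₁ ω₂ t =
      (η₁ * ω₂ - η₂ * ω₁) - parallelogramIntegrand (fun z => 1 / z) A ω₁ ω₂ t := by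
    rw [← hquasi t]; simp only [parallelogramIntegrand, zetaW, zetaSummand]; ring
  simp only [hsplit] at hseries
  rw [integral_sub intervalIntegrable_const (intervalIntegrable_parallelogramIntegrand_one_div hτ),
    integral_parallelogramIntegrand_one_div hτ] at hseries
  simpa [sub_eq_zero] using hseries
end
end

section
/- Clausen's formula holds: (₂F₁(a, b; a+b+1/2; z))² = ₃F₂(2a, 2b, a+b; 2a+2b, a+b+1/2; z) for |z| < 1 (assuming the lower parameters are not nonpositive integers). -/
open Complex

noncomputable section

/-- The Pochhammer symbol `(a)_n`. -/
def poch (a : ℂ) : ℕ → ℂ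
  | 0 => 1
  | n + 1 => poch a n * (a + n)

/-- The Gauss hypergeometric function `₂F₁(a, b; c; z)` defined by its power series. -/
def F21 (a b c z : ℂ) : ℂ :=
  ∑' n : ℕ, poch a n * poch b n / poch c n * z ^ n / (Nat.factorial n)

/-- The generalized hypergeometric function `₃F₂(α, β, γ; δ, ε; z)`. -/
def F32 (α β γ δ ε z : ℂ) : ℂ :=
  ∑' n : ℕ, poch α n * poch β n * poch γ n / (poch δ n * poch ε n) * z ^ n / (Nat.factorial n)

/-!
Compare coefficients of `zⁿ`. For `‖z‖ < 1` the ratio test makes the ₂F₁ series absolutely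
convergent, so its square is the Cauchy product, whose coefficients are the convolutions
`Dₙ = ∑ₖ Pₖ Pₙ₋ₖ` of the ₂F₁ coefficients `Pₖ`. A certificate found by Zeilberger's algorithm
telescopes this convolution into the first-order recurrence
`(2a+2b+n)(a+b+1/2+n)(n+1) Dₙ₊₁ = (2a+n)(2b+n)(a+b+n) Dₙ`,
which is the term ratio of the ₃F₂ coefficients; both sequences start at `1`.
-/

open Finset Filter Topology
open scoped Nat

def F21Coeff (a b c : ℂ) (n : ℕ) : ℂ := poch a n * poch b n / (poch c n * n !)

def F32Coeff (α β γ δ ε : ℂ) (n : ℕ) : ℂ :=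
  poch α n * poch β n * poch γ n / (poch δ n * poch ε n * n !)

-- No hypothesis on `c`: if `c + n = 0`, both sides vanish because `x / 0 = 0`.
lemma F21Coeff_succ (a b c : ℂ) (n : ℕ) :
    F21Coeff a b c (n + 1) = F21Coeff a b c n * ((a + n) * (b + n) / ((c + n) * (n + 1))) := by
  rw [F21Coeff, F21Coeff, div_mul_div_comm]
  push_cast [poch, Nat.factorial_succ]
  ring

lemma F32Coeff_succ (α β γ δ ε : ℂ) (n : ℕ) :
    F32Coeff α β γ δ ε (n + 1) = F32Coeff α β γ δ ε n *
      ((α + n) * (β + n) * (γ + n) / ((δ + n) * (ε + n) * (n + 1))) := by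
  rw [F32Coeff, F32Coeff, div_mul_div_comm]
  push_cast [poch, Nat.factorial_succ]
  ring

lemma F21_eq_tsum (a b c z : ℂ) : F21 a b c z = ∑' n, F21Coeff a b c n * z ^ n :=
  tsum_congr fun n => by rw [F21Coeff]; ring

lemma F32_eq_tsum (α β γ δ ε z : ℂ) :
    F32 α β γ δ ε z = ∑' n, F32Coeff α β γ δ ε n * z ^ n :=
  tsum_congr fun n => by rw [F32Coeff]; ring

lemma tendsto_F21Coeff_ratio (a b c : ℂ) :
    Tendsto (fun n : ℕ => (a + n) * (b + n) / ((c + n) * (n + 1))) atTop (𝓝 1) := by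
  have ha : Tendsto (fun n : ℕ => (a + 1 * n) / (1 + 1 * n)) atTop (𝓝 (1 / 1)) :=
    tendsto_add_mul_div_add_mul_atTop_nhds a 1 1 one_ne_zero
  have hb : Tendsto (fun n : ℕ => (b + 1 * n) / (c + 1 * n)) atTop (𝓝 (1 / 1)) :=
    tendsto_add_mul_div_add_mul_atTop_nhds b c 1 one_ne_zero
  have h := ha.mul hb
  rw [div_one, one_mul] at h
  refine h.congr fun n => ?_
  rw [div_mul_div_comm]
  ring

lemma summable_norm_F21Coeff_mul_pow (a b c : ℂ) {z : ℂ} (hz : ‖z‖ < 1) :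
    Summable fun n => ‖F21Coeff a b c n * z ^ n‖ := by
  obtain ⟨ρ, hzρ, hρ1⟩ := exists_between hz
  have hratio : ∀ᶠ n : ℕ in atTop, ‖(a + n) * (b + n) / ((c + n) * (n + 1)) * z‖ < ρ := by
    refine ((tendsto_F21Coeff_ratio a b c).mul_const z).norm.eventually_lt_const ?_
    rwa [one_mul]
  refine summable_of_ratio_norm_eventually_le hρ1 ?_
  filter_upwards [hratio] with n hn
  calc ‖‖F21Coeff a b c (n + 1) * z ^ (n + 1)‖‖
      = ‖(a + n) * (b + n) / ((c + n) * (n + 1)) * z‖ * ‖F21Coeff a b c n * z ^ n‖ := by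
        rw [norm_norm, F21Coeff_succ, ← norm_mul]
        ring_nf
    _ ≤ ρ * ‖‖F21Coeff a b c n * z ^ n‖‖ := by
        rw [norm_norm]
        gcongr

def F21SqCoeff (a b c : ℂ) (n : ℕ) : ℂ :=
  ∑ k ∈ range (n + 1), F21Coeff a b c k * F21Coeff a b c (n - k)

lemma F21_sq_eq_tsum (a b c : ℂ) {z : ℂ} (hz : ‖z‖ < 1) :
    F21 a b c z ^ 2 = ∑' n, F21SqCoeff a b c n * z ^ n := by
  have hs := summable_norm_F21Coeff_mul_pow a b c hz
  rw [F21_eq_tsum, sq, tsum_mul_tsum_eq_tsum_sum_range_of_summable_norm hs hs]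
  refine tsum_congr fun n => ?_
  rw [F21SqCoeff, sum_mul]
  refine sum_congr rfl fun k hk => ?_
  rw [← pow_sub_mul_pow z (mem_range_succ_iff.mp hk)]
  ring

section Clausen

variable (a b : ℂ)

-- Zeilberger's certificate for the convolution `F21SqCoeff a b (a + b + 1 / 2)`.
def clausenCert (n k : ℕ) : ℂ :=
  k * ((a + b - 1 / 2) * (2 * a + 2 * b + 3 * n + 2) + 3 * (n + 1) * k - 2 * k ^ 2)

lemma clausenCert_telescope (h : ∀ n : ℕ, a + b + 1 / 2 + n ≠ 0) (k j : ℕ) :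
    (2 * a + (k + j : ℕ)) * (2 * b + (k + j : ℕ)) * (a + b + (k + j : ℕ)) *
        (F21Coeff a b (a + b + 1 / 2) k * F21Coeff a b (a + b + 1 / 2) j)
      - (2 * a + 2 * b + (k + j : ℕ)) * (a + b + 1 / 2 + (k + j : ℕ)) * ((k + j : ℕ) + 1) *
        (F21Coeff a b (a + b + 1 / 2) k * F21Coeff a b (a + b + 1 / 2) (j + 1))
    = clausenCert a b (k + j) (k + 1) *
        (F21Coeff a b (a + b + 1 / 2) (k + 1) * F21Coeff a b (a + b + 1 / 2) j)
      - clausenCert a b (k + j) k *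
        (F21Coeff a b (a + b + 1 / 2) k * F21Coeff a b (a + b + 1 / 2) (j + 1)) := by
  have hk := h k
  have hj := h j
  rw [F21Coeff_succ, F21Coeff_succ, clausenCert, clausenCert]
  push_cast
  -- Eliminating `b` turns `c + k`, `c + j` into denominators that `field_simp` can clear.
  generalize hc : a + b + 1 / 2 = c at hk hj ⊢
  obtain rfl : b = c - a - 1 / 2 := by rw [← hc]; ring
  field_simp
  ring

lemma F21SqCoeff_recurrence (h : ∀ n : ℕ, a + b + 1 / 2 + n ≠ 0) (n : ℕ) :
    (2 * a + 2 * b + n) * (a + b + 1 / 2 + n) * (n + 1) * F21SqCoeff a b (a + b + 1 / 2) (n + 1)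
      = (2 * a + n) * (2 * b + n) * (a + b + n) * F21SqCoeff a b (a + b + 1 / 2) n := by
  set P := F21Coeff a b (a + b + 1 / 2)
  set G : ℕ → ℂ := fun k => clausenCert a b n k * (P k * P (n + 1 - k))
  have hterm : ∀ k ∈ range (n + 1), G (k + 1) - G k =
      (2 * a + n) * (2 * b + n) * (a + b + n) * (P k * P (n - k))
        - (2 * a + 2 * b + n) * (a + b + 1 / 2 + n) * (n + 1) * (P k * P (n + 1 - k)) := by
    intro k hk
    obtain ⟨j, rfl⟩ := Nat.exists_eq_add_of_le (mem_range_succ_iff.mp hk)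
    simp only [G]
    rw [show k + j + 1 - (k + 1) = j by omega, show k + j + 1 - k = j + 1 by omega,
      show k + j - k = j by omega]
    exact (clausenCert_telescope a b h k j).symm
  have htel := sum_range_sub G (n + 1)
  rw [sum_congr rfl hterm, sum_sub_distrib, ← mul_sum, ← mul_sum] at htel
  have hG0 : G 0 = 0 := by simp [G, clausenCert]
  have hGn : G (n + 1) =
      (2 * a + 2 * b + n) * (a + b + 1 / 2 + n) * (n + 1) * (P (n + 1) * P 0) := by
    simp only [G, clausenCert, Nat.sub_self]
    push_cast
    ring
  rw [hG0, hGn] at htel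
  rw [F21SqCoeff, sum_range_succ, Nat.sub_self, F21SqCoeff]
  linear_combination -htel

lemma F21SqCoeff_eq_F32Coeff (h1 : ∀ n : ℕ, a + b + 1 / 2 + n ≠ 0)
    (h2 : ∀ n : ℕ, 2 * a + 2 * b + n ≠ 0) (n : ℕ) :
    F21SqCoeff a b (a + b + 1 / 2) n
      = F32Coeff (2 * a) (2 * b) (a + b) (2 * a + 2 * b) (a + b + 1 / 2) n := by
  induction n with
  | zero => simp [F21SqCoeff, F21Coeff, F32Coeff, poch]
  | succ n ih =>
    have hB : (2 * a + 2 * b + n) * (a + b + 1 / 2 + n) * (n + 1) ≠ 0 :=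
      mul_ne_zero (mul_ne_zero (h2 n) (h1 n)) n.cast_add_one_ne_zero
    rw [F32Coeff_succ, ← ih, mul_div_assoc', eq_div_iff hB, mul_comm,
      F21SqCoeff_recurrence a b h1 n]
    ring

end Clausen

/-- **Clausen's formula**:
`(₂F₁(a, b; a+b+1/2; z))² = ₃F₂(2a, 2b, a+b; 2a+2b, a+b+1/2; z)` for `|z| < 1`. -/
theorem clausen_formula (a b : ℂ)
    (h1 : ∀ n : ℕ, a + b + 1 / 2 + n ≠ 0) (h2 : ∀ n : ℕ, 2 * a + 2 * b + n ≠ 0)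
    (z : ℂ) (hz : ‖z‖ < 1) :
    (F21 a b (a + b + 1 / 2) z) ^ 2
      = F32 (2 * a) (2 * b) (a + b) (2 * a + 2 * b) (a + b + 1 / 2) z := by
  rw [F21_sq_eq_tsum a b _ hz, F32_eq_tsum]
  exact tsum_congr fun n => by rw [F21SqCoeff_eq_F32Coeff a b h1 h2]
end
end

section
/- For all natural numbers n ≥ 0 one has (1/6)_n · (5/6)_n · (1/2)_n = (6n)! / ((3n)! · 12^{3n}), and consequently (₂F₁(1/12, 5/12; 1; z))² = Σ_{n≥0} (6n)!/((3n)!(n!)³) · zⁿ/12^{3n} for |z| < 1. -/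
open Complex

noncomputable section

/-!
The first identity is an induction on `n`: going from `n` to `n + 1` multiplies the left side by
`(n + 1/6)(n + 5/6)(n + 1/2) = (6n + 1)(6n + 3)(6n + 5) / 6³` and `(6n)! / (3n)!` by
`(6n + 1)(6n + 3)(6n + 5) · 2³`.

The square of `₂F₁(1/12, 5/12; 1; z)` is the Cauchy product of its coefficient sequence `u` with
itself, so it suffices to show that `s n = ∑ₖ u k u (n - k)` equals `(1/6)_n (5/6)_n (1/2)_n / n!³`
(Clausen's formula at `a = 1/12`, `b = 5/12`). Both sides satisfy the recurrence
`(n + 1)³ s (n + 1) = (n + 1/6)(n + 5/6)(n + 1/2) s n`; for the convolution this is the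
Wilf–Zeilberger method: the defect of the recurrence, taken termwise, telescopes in `k`.
-/

open Finset
open scoped Nat

theorem poch_succ (a : ℂ) (n : ℕ) : poch a (n + 1) = poch a n * (a + n) := rfl

theorem poch_one (n : ℕ) : poch 1 n = n ! := by
  induction n with
  | zero => simp [poch]
  | succ n ih => rw [poch_succ, ih, Nat.factorial_succ]; push_cast; ring

theorem norm_poch_le_factorial {a : ℂ} (ha : ‖a‖ ≤ 1) (n : ℕ) : ‖poch a n‖ ≤ n ! := by
  induction n with
  | zero => simp [poch]
  | succ n ih =>
    have hstep : ‖a + n‖ ≤ n + 1 := by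
      calc ‖a + n‖ ≤ ‖a‖ + ‖(n : ℂ)‖ := norm_add_le _ _
        _ ≤ n + 1 := by rw [Complex.norm_natCast]; linarith
    rw [poch_succ, norm_mul, Nat.factorial_succ, Nat.cast_mul, mul_comm ((n + 1 : ℕ) : ℝ)]
    push_cast
    exact mul_le_mul ih hstep (norm_nonneg _) (Nat.cast_nonneg _)

theorem poch_sixths_mul_eq_factorial (n : ℕ) :
    poch (1 / 6) n * poch (5 / 6) n * poch (1 / 2) n * ((3 * n)! * 12 ^ (3 * n)) = (6 * n)! := by
  induction n with
  | zero => simp [poch]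
  | succ n ih =>
    rw [show 6 * (n + 1) = 6 * n + 5 + 1 by ring, show 3 * (n + 1) = 3 * n + 2 + 1 by ring]
    simp only [poch_succ, Nat.factorial_succ]
    push_cast
    linear_combination
      (6 * n + 1 : ℂ) * (6 * n + 2) * (6 * n + 3) * (6 * n + 4) * (6 * n + 5) * (6 * n + 6) * ih

theorem poch_sixths_eq (n : ℕ) :
    poch (1 / 6) n * poch (5 / 6) n * poch (1 / 2) n = (6 * n)! / ((3 * n)! * 12 ^ (3 * n)) :=
  eq_div_of_mul_eq (mul_ne_zero (by simp [Nat.factorial_ne_zero]) (by norm_num))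
    (poch_sixths_mul_eq_factorial n)

def F21OneCoeff (a b : ℂ) (n : ℕ) : ℂ := poch a n * poch b n / (n ! : ℂ) ^ 2

theorem F21_one_eq_tsum (a b z : ℂ) : F21 a b 1 z = ∑' n, F21OneCoeff a b n * z ^ n := by
  refine tsum_congr fun n => ?_
  rw [poch_one, F21OneCoeff]
  ring

theorem F21OneCoeff_zero (a b : ℂ) : F21OneCoeff a b 0 = 1 := by simp [F21OneCoeff, poch]

theorem F21OneCoeff_succ (a b : ℂ) (n : ℕ) :
    F21OneCoeff a b (n + 1) = F21OneCoeff a b n * ((a + n) * (b + n) / (n + 1) ^ 2) := by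
  have hn : (n : ℂ) + 1 ≠ 0 := Nat.cast_add_one_ne_zero n
  simp only [F21OneCoeff, poch_succ, Nat.factorial_succ]
  push_cast
  field_simp

theorem norm_F21OneCoeff_le_one {a b : ℂ} (ha : ‖a‖ ≤ 1) (hb : ‖b‖ ≤ 1) (n : ℕ) :
    ‖F21OneCoeff a b n‖ ≤ 1 := by
  rw [F21OneCoeff, norm_div, norm_mul, norm_pow, Complex.norm_natCast,
    div_le_one (by positivity), sq]
  exact mul_le_mul (norm_poch_le_factorial ha n) (norm_poch_le_factorial hb n)
    (norm_nonneg _) (Nat.cast_nonneg _)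

theorem summable_norm_F21OneCoeff_mul_pow {a b z : ℂ} (ha : ‖a‖ ≤ 1) (hb : ‖b‖ ≤ 1)
    (hz : ‖z‖ < 1) : Summable fun n => ‖F21OneCoeff a b n * z ^ n‖ := by
  refine Summable.of_nonneg_of_le (fun n => norm_nonneg _) (fun n => ?_)
    (summable_geometric_of_lt_one (norm_nonneg z) hz)
  rw [norm_mul, norm_pow]
  exact mul_le_of_le_one_left (by positivity) (norm_F21OneCoeff_le_one ha hb n)

theorem F21_one_sq_eq_tsum {a b z : ℂ} (ha : ‖a‖ ≤ 1) (hb : ‖b‖ ≤ 1) (hz : ‖z‖ < 1) :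
    F21 a b 1 z ^ 2 = ∑' n, (∑ k ∈ range (n + 1), F21OneCoeff a b k * F21OneCoeff a b (n - k))
      * z ^ n := by
  have hsumm := summable_norm_F21OneCoeff_mul_pow ha hb hz
  rw [F21_one_eq_tsum, sq, tsum_mul_tsum_eq_tsum_sum_range_of_summable_norm hsumm hsumm]
  refine tsum_congr fun n => ?_
  rw [sum_mul]
  refine sum_congr rfl fun k hk => ?_
  rw [← pow_mul_pow_sub z (Nat.lt_succ_iff.1 (mem_range.1 hk))]
  ring

section Clausen

local notation "u" => F21OneCoeff (1 / 12) (5 / 12)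

/- The Wilf–Zeilberger certificate for the convolution `∑ₖ u k u (n - k)`; the cubic factor was
found by Zeilberger's algorithm. -/
def clausenWZ (n k : ℕ) : ℂ :=
  (k : ℂ) ^ 2 * (2 * k ^ 3 - (7 * n + 4) * k ^ 2 + (8 * n ^ 2 + 17 / 2 * n + 113 / 72) * k
    - (3 * n ^ 3 + 9 / 2 * n ^ 2 + 77 / 48 * n + 5 / 48)) * u k * u (n - k) / ((n - k : ℕ) + 1) ^ 2

theorem clausenWZ_zero_right (n : ℕ) : clausenWZ n 0 = 0 := by simp [clausenWZ]

theorem clausenWZ_step {n k : ℕ} (hk : k < n) :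
    ((n : ℂ) + 1) ^ 3 * (u k * u (n + 1 - k))
      - (n + 1 / 6) * (n + 5 / 6) * (n + 1 / 2) * (u k * u (n - k))
      = clausenWZ n (k + 1) - clausenWZ n k := by
  obtain ⟨m, rfl⟩ := Nat.exists_eq_add_of_lt hk
  rw [clausenWZ, clausenWZ, show k + m + 1 + 1 - k = m + 1 + 1 by omega,
    show k + m + 1 - k = m + 1 by omega, show k + m + 1 - (k + 1) = m by omega]
  simp only [F21OneCoeff_succ]
  have hk1 : (k : ℂ) + 1 ≠ 0 := Nat.cast_add_one_ne_zero k
  have hm1 : (m : ℂ) + 1 ≠ 0 := Nat.cast_add_one_ne_zero m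
  have hm2 : (m : ℂ) + 1 + 1 ≠ 0 := by exact_mod_cast Nat.succ_ne_zero (m + 1)
  push_cast
  field_simp
  ring

theorem clausenWZ_last (n : ℕ) :
    ((n : ℂ) + 1) ^ 3 * (u n * u 1) - (n + 1 / 6) * (n + 5 / 6) * (n + 1 / 2) * (u n * u 0)
      = -((n : ℂ) + 1) ^ 3 * u (n + 1) - clausenWZ n n := by
  rw [clausenWZ, Nat.sub_self, F21OneCoeff_succ _ _ n, F21OneCoeff_succ _ _ 0, F21OneCoeff_zero]
  have hn1 : (n : ℂ) + 1 ≠ 0 := Nat.cast_add_one_ne_zero n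
  push_cast
  field_simp
  ring

theorem clausen_convolution_recurrence (n : ℕ) :
    ((n : ℂ) + 1) ^ 3 * ∑ k ∈ range (n + 2), u k * u (n + 1 - k)
      = (n + 1 / 6) * (n + 5 / 6) * (n + 1 / 2) * ∑ k ∈ range (n + 1), u k * u (n - k) := by
  have htele : ∑ k ∈ range (n + 1), (((n : ℂ) + 1) ^ 3 * (u k * u (n + 1 - k))
      - (n + 1 / 6) * (n + 5 / 6) * (n + 1 / 2) * (u k * u (n - k)))
      = -((n : ℂ) + 1) ^ 3 * u (n + 1) := by
    rw [sum_range_succ, sum_congr rfl fun k hk => clausenWZ_step (mem_range.1 hk),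
      sum_range_sub, clausenWZ_zero_right, Nat.add_sub_cancel_left, Nat.sub_self, clausenWZ_last]
    ring
  rw [sum_sub_distrib, ← mul_sum, ← mul_sum] at htele
  rw [sum_range_succ, Nat.sub_self, F21OneCoeff_zero]
  linear_combination htele

theorem clausen_convolution_eq (n : ℕ) :
    ∑ k ∈ range (n + 1), u k * u (n - k)
      = poch (1 / 6) n * poch (5 / 6) n * poch (1 / 2) n / (n ! : ℂ) ^ 3 := by
  induction n with
  | zero => simp [F21OneCoeff_zero, poch]
  | succ n ih =>
    have hn1 : (n : ℂ) + 1 ≠ 0 := Nat.cast_add_one_ne_zero n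
    apply mul_left_cancel₀ (pow_ne_zero 3 hn1)
    rw [clausen_convolution_recurrence, ih]
    simp only [poch_succ, Nat.factorial_succ]
    push_cast
    field_simp
    ring

end Clausen

/-- `(1/6)_n (5/6)_n (1/2)_n = (6n)!/((3n)!·12^{3n})`, and consequently
`(₂F₁(1/12, 5/12; 1; z))² = Σ_{n≥0} (6n)!/((3n)!(n!)³) · zⁿ/12^{3n}` for `|z| < 1`. -/
theorem poch_prod_eq_and_F21_sq (z : ℂ) (hz : ‖z‖ < 1) :
    (∀ n : ℕ, poch (1 / 6) n * poch (5 / 6) n * poch (1 / 2) n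
        = (Nat.factorial (6 * n) : ℂ) / ((Nat.factorial (3 * n) : ℂ) * 12 ^ (3 * n))) ∧
    (F21 (1 / 12) (5 / 12) 1 z) ^ 2
      = ∑' n : ℕ, (Nat.factorial (6 * n) : ℂ)
          / ((Nat.factorial (3 * n) : ℂ) * (Nat.factorial n : ℂ) ^ 3)
          * z ^ n / 12 ^ (3 * n) := by
  refine ⟨poch_sixths_eq, ?_⟩
  rw [F21_one_sq_eq_tsum (by norm_num) (by norm_num) hz]
  refine tsum_congr fun n => ?_
  rw [clausen_convolution_eq, poch_sixths_eq]
  ring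
end
end
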